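/- arXiv:1406.3131 — 6 statements merged into one kernel-verified Lean document; each statement's English description precedes it below -/
import Mathlib

section
/- Let A be a finite multiset of positive integers whose elements are pairwise divisible (i.e., they can be ordered so each divides the next), let s be the maximum element of A, and let c be a positive integer such that s divides c and the sum of elements of A is at least c. Then there exists a sub-multiset B of A whose elements sum exactly to c. -/
/-! Greedy: take the largest element `s`, which divides `c` and hence is at most `c`, and solve
the problem for `c - s` with the remaining elements. Every remaining element divides `s` (it is
a smaller link of the chain), hence divides `c - s`, so the invariant is preserved. -/

namespace Nat

theorem dvd_of_dvd_or_dvd_of_le {a b : ℕ} (hab : a ∣ b ∨ b ∣ a) (ha : a ≠ 0) (hle : a ≤ b) :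
    a ∣ b := by
  rcases hab with hab | hba
  · exact hab
  · rw [le_antisymm hle (Nat.le_of_dvd (Nat.pos_of_ne_zero ha) hba)]

end Nat

namespace Multiset

theorem exists_le_sum_eq_of_forall_dvd (A : Multiset ℕ)
    (hchain : ∀ a ∈ A, ∀ b ∈ A, a ∣ b ∨ b ∣ a) {c : ℕ} (hdvd : ∀ a ∈ A, a ∣ c)
    (hsum : c ≤ A.sum) : ∃ B ≤ A, B.sum = c := by
  induction A using Multiset.strongInductionOn generalizing c with
  | _ A ih =>
    rcases Nat.eq_zero_or_pos c with rfl | hc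
    · exact ⟨0, zero_le A, sum_zero⟩
    have hA : A.toFinset.Nonempty := by
      rw [toFinset_nonempty]
      rintro rfl
      simp only [sum_zero] at hsum
      omega
    obtain ⟨s, hs, hmax⟩ := A.toFinset.exists_max_image id hA
    rw [mem_toFinset] at hs
    replace hmax : ∀ a ∈ A, a ≤ s := fun a ha => hmax a (mem_toFinset.mpr ha)
    have hsc : s ≤ c := Nat.le_of_dvd hc (hdvd s hs)
    have hsum_erase : s + (A.erase s).sum = A.sum := sum_erase hs
    have hdvd_erase : ∀ a ∈ A.erase s, a ∣ c - s := fun a ha => by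
      have ha' := mem_of_mem_erase ha
      have ha0 : a ≠ 0 := fun h => hc.ne' (zero_dvd_iff.mp (h ▸ hdvd a ha'))
      have has : a ∣ s := Nat.dvd_of_dvd_or_dvd_of_le (hchain a ha' s hs) ha0 (hmax a ha')
      exact Nat.dvd_sub (hdvd a ha') has
    obtain ⟨B, hB, hBsum⟩ := ih (A.erase s) (erase_lt.mpr hs)
      (fun a ha b hb => hchain a (mem_of_mem_erase ha) b (mem_of_mem_erase hb))
      hdvd_erase (by omega)
    refine ⟨s ::ₘ B, ?_, ?_⟩
    · simpa only [cons_erase hs] using cons_le_cons s hB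
    · rw [sum_cons, hBsum]
      omega

end Multiset

theorem divisible_submultiset_sum_general
    (A : Multiset ℕ) (s c : ℕ)
    (hpos : ∀ a ∈ A, 0 < a)
    (hchain : ∀ a ∈ A, ∀ b ∈ A, a ∣ b ∨ b ∣ a)
    (hs : s ∈ A) (hmax : ∀ a ∈ A, a ≤ s)
    (hdvd : s ∣ c) (hsum : c ≤ A.sum) :
    ∃ B : Multiset ℕ, B ≤ A ∧ B.sum = c := by
  have hdvd_all : ∀ a ∈ A, a ∣ c := fun a ha =>
    (Nat.dvd_of_dvd_or_dvd_of_le (hchain a ha s hs) (hpos a ha).ne' (hmax a ha)).trans hdvd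
  exact A.exists_le_sum_eq_of_forall_dvd hchain hdvd_all hsum

/-- Proposition 1 (divisible subset): from a multiset of pairwise-divisible positive
integers, whose maximum `s` divides `c` and whose total is at least `c`, one can
extract a sub-multiset summing exactly to `c`. -/
theorem divisible_submultiset_sum
    (A : Multiset ℕ) (s c : ℕ)
    (hpos : ∀ a ∈ A, 0 < a)
    (hchain : ∀ a ∈ A, ∀ b ∈ A, a ∣ b ∨ b ∣ a)
    (hs : s ∈ A) (hmax : ∀ a ∈ A, a ≤ s)
    (hc : 0 < c) (hdvd : s ∣ c) (hsum : c ≤ A.sum) :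
    ∃ B : Multiset ℕ, B ≤ A ∧ B.sum = c :=
  divisible_submultiset_sum_general A s c hpos hchain hs hmax hdvd hsum
end

section
/- Let A be a finite multiset of positive integers with pairwise divisible elements, let s be the maximum element of A, and let b ≥ s be an integer divisible by s. Then the minimum number of parts in a partition of A into sub-multisets each of total sum at most b equals ⌈(sum of A)/b⌉; moreover there exists such a partition in which ⌈(sum of A)/b⌉ − 1 of the parts have total sum exactly b. -/
/-! Fill bins of size `b` greedily with the largest items first. Since every item divides every
larger one, and all of them divide `b`, the remaining capacity of a bin stays divisible by each
item not yet placed, so a bin is never left partly empty while some item remains: whenever the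
items left over sum to at least `b`, some of them fill a bin exactly. Hence all bins but the last
are full, and `⌈sum A / b⌉` bins suffice; no partition can use fewer, since `k` bins hold at most
`k * b`. -/

namespace Multiset

lemma sum_sum_le_card_mul {P : Multiset (Multiset ℕ)} {b : ℕ} (hP : ∀ p ∈ P, p.sum ≤ b) :
    P.sum.sum ≤ P.card * b := by
  rw [← join, sum_join, ← card_map sum P, ← smul_eq_mul]
  exact sum_le_card_nsmul _ _ (by simpa using hP)

lemma ceilDiv_le_card_of_sum_eq {A : Multiset ℕ} {P : Multiset (Multiset ℕ)} {b : ℕ} (hb : 0 < b)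
    (hPA : P.sum = A) (hP : ∀ p ∈ P, p.sum ≤ b) : A.sum ⌈/⌉ b ≤ P.card := by
  rw [ceilDiv_le_iff_le_mul hb, mul_comm, ← hPA]
  exact sum_sum_le_card_mul hP

lemma exists_le_sum_eq_of_dvd_chain {A : Multiset ℕ} {b : ℕ}
    (hchain : ∀ a ∈ A, ∀ a' ∈ A, a ≤ a' → a ∣ a') (hdvd : ∀ a ∈ A, a ∣ b)
    (hsum : b ≤ A.sum) : ∃ S ≤ A, S.sum = b := by
  induction A using strongInductionOn generalizing b with
  | ih A IH =>
    rcases Nat.eq_zero_or_pos b with rfl | hb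
    · exact ⟨0, zero_le A, sum_zero⟩
    obtain ⟨m, hmA, hmax⟩ : ∃ m ∈ A, ∀ a ∈ A, a ≤ m := by
      have hA : A.toFinset.Nonempty := by
        rw [toFinset_nonempty]; rintro rfl; rw [sum_zero] at hsum; omega
      simpa using A.toFinset.exists_max_image id hA
    have hmb : m ≤ b := Nat.le_of_dvd hb (hdvd m hmA)
    rcases hmb.eq_or_lt with rfl | hmb
    · exact ⟨{m}, singleton_le.2 hmA, sum_singleton m⟩
    have herase : A.erase m < A := erase_lt.2 hmA
    have hmem : ∀ a ∈ A.erase m, a ∈ A := fun a ha => mem_of_mem_erase ha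
    -- every remaining item divides `m`, hence the reduced capacity `b - m`
    obtain ⟨S, hSA, hS⟩ := IH _ herase
      (fun a ha a' ha' => hchain a (hmem a ha) a' (hmem a' ha'))
      (fun a ha => Nat.dvd_sub (hdvd a (hmem a ha))
        (hchain a (hmem a ha) m hmA (hmax a (hmem a ha))))
      (by rw [← sum_erase hmA] at hsum; omega)
    refine ⟨m ::ₘ S, ?_, by rw [sum_cons, hS]; omega⟩
    calc m ::ₘ S ≤ m ::ₘ A.erase m := cons_le_cons m hSA
      _ = A := cons_erase hmA

lemma exists_partition_card_eq_ceilDiv {A : Multiset ℕ} {b : ℕ} (hb : 0 < b)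
    (hpos : ∀ a ∈ A, 0 < a) (hchain : ∀ a ∈ A, ∀ a' ∈ A, a ≤ a' → a ∣ a')
    (hdvd : ∀ a ∈ A, a ∣ b) :
    ∃ P : Multiset (Multiset ℕ), P.sum = A ∧ (∀ p ∈ P, p.sum ≤ b) ∧
      P.card = A.sum ⌈/⌉ b ∧ A.sum ⌈/⌉ b - 1 ≤ (P.filter (fun p => p.sum = b)).card := by
  induction A using strongInductionOn with
  | ih A IH =>
    rcases le_or_gt A.sum b with hle | hgt
    · rcases eq_or_ne A 0 with rfl | hA
      · exact ⟨0, by simp⟩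
      have hone : A.sum ⌈/⌉ b = 1 := by
        obtain ⟨a, ha⟩ := exists_mem_of_ne_zero hA
        have := (hpos a ha).trans_le (le_sum_of_mem ha)
        rw [Nat.ceilDiv_eq_add_pred_div]
        exact Nat.div_eq_of_lt_le (by omega) (by omega)
      exact ⟨{A}, by simp [hle, hone]⟩
    obtain ⟨S, hSA, hS⟩ := exists_le_sum_eq_of_dvd_chain hchain hdvd hgt.le
    obtain ⟨R, rfl⟩ := exists_add_of_le hSA
    have hmem : ∀ a ∈ R, a ∈ S + R := fun a ha => mem_add.2 (Or.inr ha)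
    have hR : R < S + R := lt_add_of_pos_left R <| pos_iff_ne_zero.2 <| by
      rintro rfl; rw [sum_zero] at hS; omega
    obtain ⟨P, hPR, hPb, hPcard, hPfull⟩ := IH R hR (fun a ha => hpos a (hmem a ha))
      (fun a ha a' ha' => hchain a (hmem a ha) a' (hmem a' ha')) (fun a ha => hdvd a (hmem a ha))
    have hsucc : (S + R).sum ⌈/⌉ b = R.sum ⌈/⌉ b + 1 := by
      simp only [Nat.ceilDiv_eq_add_pred_div, sum_add, hS]
      rw [show b + R.sum + b - 1 = R.sum + b - 1 + b by omega, Nat.add_div_right _ hb]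
    refine ⟨S ::ₘ P, by rw [sum_cons, hPR], ?_, by rw [card_cons, hPcard, hsucc], ?_⟩
    · simpa [hS] using hPb
    · rw [filter_cons_of_pos (p := fun p => p.sum = b) P hS, card_cons, hsucc]
      omega

end Multiset

lemma dvd_of_le_of_dvd_or_dvd {a a' : ℕ} (ha : 0 < a) (hle : a ≤ a') (h : a ∣ a' ∨ a' ∣ a) :
    a ∣ a' :=
  h.elim id fun h' => (hle.antisymm (Nat.le_of_dvd ha h')).symm ▸ dvd_rfl

open Multiset in
/-- Proposition 2: a multiset `A` of pairwise-divisible positive integers with maximum `s`,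
and `b ≥ s` a multiple of `s`, can be partitioned into sub-multisets of sum at most `b`
using at least `⌈sum A / b⌉` parts, this minimum is attained, and moreover attained by a
partition in which `⌈sum A / b⌉ - 1` parts have sum exactly `b`. -/
theorem divisible_multiset_partition
    (A : Multiset ℕ) (s b : ℕ)
    (hpos : ∀ a ∈ A, 0 < a)
    (hchain : ∀ a ∈ A, ∀ a' ∈ A, a ∣ a' ∨ a' ∣ a)
    (hs : s ∈ A) (hmax : ∀ a ∈ A, a ≤ s)
    (hb : s ≤ b) (hdvd : s ∣ b) :
    IsLeast {n : ℕ | ∃ P : Multiset (Multiset ℕ),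
        P.sum = A ∧ (∀ p ∈ P, p.sum ≤ b) ∧ P.card = n}
      ((A.sum + b - 1) / b) ∧
    ∃ P : Multiset (Multiset ℕ),
      P.sum = A ∧ (∀ p ∈ P, p.sum ≤ b) ∧
      P.card = (A.sum + b - 1) / b ∧
      (A.sum + b - 1) / b - 1 ≤ (P.filter (fun p => p.sum = b)).card := by
  have hbpos : 0 < b := (hpos s hs).trans_le hb
  have hchain' : ∀ a ∈ A, ∀ a' ∈ A, a ≤ a' → a ∣ a' := fun a ha a' ha' hle =>
    dvd_of_le_of_dvd_or_dvd (hpos a ha) hle (hchain a ha a' ha')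
  have hdvdb : ∀ a ∈ A, a ∣ b := fun a ha => (hchain' a ha s hs (hmax a ha)).trans hdvd
  simp only [← Nat.ceilDiv_eq_add_pred_div]
  obtain ⟨P, hPA, hPb, hPcard, hPfull⟩ :=
    exists_partition_card_eq_ceilDiv hbpos hpos hchain' hdvdb
  refine ⟨⟨⟨P, hPA, hPb, hPcard⟩, ?_⟩, P, hPA, hPb, hPcard, hPfull⟩
  rintro n ⟨Q, hQA, hQb, rfl⟩
  exact ceilDiv_le_card_of_sum_eq hbpos hQA hQb
end

section
/- Let d_1 < ... < d_l be a divisible chain of positive integers with d_1 = 1, and let B_w = {w_1,...,w_k} be a block: a set of item types with sizes s_{w_1} ≤ ... ≤ s_{w_k} (each s equals some d_q) and bounds b_{w_v}, satisfying s_{w_j} ≤ s_{w_1} + Σ_{v<j} b_{w_v} s_{w_v} for all j ≥ 2. Suppose nonnegative integers δ^h_q (for 1 ≤ q ≤ l, q ≤ h ≤ l), each a multiple of s_{w_1} and at most Σ_v b_{w_v} s_{w_v}, satisfy Σ_{h=q}^{l} ⌈δ^h_q / d_q⌉ ≤ Σ_{w ∈ B_w: s_w = d_q} b_w for every q. Then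 there exist a subset R ⊆ B_w and nonnegative integers λ^h_j (for j ∈ R, h ≥ g(j), where d_{g(j)} = s_j) such that Σ_h λ^h_j ≤ b_j for all j ∈ R, and Σ_{j∈R, g(j)=q} λ^h_j = ⌈δ^h_q / d_q⌉ for every q and h ≥ q. -/
open Finset

/-! For each level `q`, the items of size `d q` are exactly those with `g j = q`, because the chain
is strictly increasing. Their total bound covers the total demand `∑ h, ⌈δ q h / d q⌉`, and a
supply covering a demand can always be split into an integral transportation plan: serve the
demands one at a time, each greedily out of the remaining supplies. -/

theorem Finset.exists_le_sum_eq_of_le_sum {ι : Type*} (S : Finset ι) (a : ι → ℕ) {n : ℕ}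
    (hn : n ≤ ∑ i ∈ S, a i) : ∃ y : ι → ℕ, (∀ i, y i ≤ a i) ∧ ∑ i ∈ S, y i = n := by
  classical
  induction S using Finset.induction_on generalizing n with
  | empty => exact ⟨0, fun _ => Nat.zero_le _, by simp_all⟩
  | insert i S hi ih =>
    rw [sum_insert hi] at hn
    obtain ⟨y, hya, hyS⟩ := ih (n := n - min n (a i)) (by omega)
    refine ⟨Function.update y i (min n (a i)), fun j => ?_, ?_⟩
    · rcases eq_or_ne j i with rfl | hj
      · simp
      · simpa [hj] using hya j
    · rw [sum_insert hi, Function.update_self,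
        sum_congr rfl fun j hj => Function.update_of_ne (ne_of_mem_of_not_mem hj hi) _ _, hyS]
      omega

theorem Finset.exists_transport_of_sum_le_sum {ι κ : Type*} (S : Finset ι) (T : Finset κ)
    (a : ι → ℕ) (c : κ → ℕ) (h : ∑ t ∈ T, c t ≤ ∑ i ∈ S, a i) :
    ∃ x : ι → κ → ℕ, (∀ i, ∑ t ∈ T, x i t ≤ a i) ∧ ∀ t ∈ T, ∑ i ∈ S, x i t = c t := by
  classical
  induction T using Finset.induction_on generalizing a with
  | empty => exact ⟨0, fun _ => by simp, by simp⟩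
  | insert t T ht ih =>
    rw [sum_insert ht] at h
    obtain ⟨y, hya, hyS⟩ := S.exists_le_sum_eq_of_le_sum a (n := c t) (by omega)
    have hrest : ∑ u ∈ T, c u ≤ ∑ i ∈ S, (a i - y i) := by
      rw [sum_tsub_distrib _ fun i _ => hya i]
      omega
    obtain ⟨x, hxrow, hxcol⟩ := ih (fun i => a i - y i) hrest
    refine ⟨fun i u => if u = t then y i else x i u, fun i => ?_, fun u hu => ?_⟩
    · have hT : ∑ u ∈ T, (if u = t then y i else x i u) = ∑ u ∈ T, x i u :=
        sum_congr rfl fun u hu => if_neg (ne_of_mem_of_not_mem hu ht)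
      dsimp only
      rw [sum_insert ht, if_pos rfl, hT]
      have := hxrow i
      have := hya i
      omega
    · rcases mem_insert.1 hu with rfl | hu
      · simpa using hyS
      · simpa [ne_of_mem_of_not_mem hu ht] using hxcol u hu

theorem block_decomposition_general
    (l k : ℕ) (d : ℕ → ℕ) (s b : Fin k → ℕ) (g : Fin k → ℕ)
    (hmono : ∀ q, 1 ≤ q → q < l → d q < d (q + 1))
    (hg : ∀ j : Fin k, g j ∈ Icc 1 l ∧ s j = d (g j))
    (δ : ℕ → ℕ → ℕ)
    (hcond : ∀ q ∈ Icc 1 l,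
      ∑ h ∈ Icc q l, (δ q h + d q - 1) / d q
        ≤ ∑ w ∈ univ.filter (fun w : Fin k => s w = d q), b w) :
    ∃ (R : Finset (Fin k)) (lam : Fin k → ℕ → ℕ),
      (∀ j ∈ R, ∑ h ∈ Icc (g j) l, lam j h ≤ b j) ∧
      (∀ q ∈ Icc 1 l, ∀ h ∈ Icc q l,
        ∑ j ∈ R.filter (fun j => g j = q), lam j h = (δ q h + d q - 1) / d q) := by
  have hinj : Set.InjOn d (Set.Icc 1 l) :=
    (strictMonoOn_of_lt_add_one Set.ordConnected_Icc fun q _ hq hq1 =>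
      hmono q hq.1 (Nat.lt_of_succ_le hq1.2)).injOn
  have hlevel : ∀ q ∈ Icc 1 l,
      univ.filter (fun w : Fin k => s w = d q) = univ.filter (fun w => g w = q) := by
    intro q hq
    ext w
    simp only [mem_filter, mem_univ, true_and, (hg w).2]
    exact ⟨fun h => hinj (coe_Icc 1 l ▸ (hg w).1) (coe_Icc 1 l ▸ hq) h, fun h => h ▸ rfl⟩
  have hplan : ∀ q ∈ Icc 1 l, ∃ x : Fin k → ℕ → ℕ, (∀ j, ∑ h ∈ Icc q l, x j h ≤ b j) ∧
      ∀ h ∈ Icc q l, ∑ j ∈ univ.filter (fun j => g j = q), x j h = (δ q h + d q - 1) / d q :=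
    fun q hq => exists_transport_of_sum_le_sum _ _ b _ (hlevel q hq ▸ hcond q hq)
  choose! x hrow hcol using hplan
  refine ⟨univ, fun j => x (g j) j, fun j _ => hrow _ (hg j).1 j, fun q hq h hh => ?_⟩
  rw [← hcol q hq h hh]
  exact sum_congr rfl fun j hj => congrArg (x · j h) (mem_filter.1 hj).2

/-- Proposition 3 (block decomposition): given a block `{0,…,k-1}` of item types with
sizes `s` from a divisible chain `d`, bounds `b`, and quantities `δ q h` (multiples of the
smallest size, bounded by the block's total size) satisfying the ceiling condition, there
exist a subset `R` of the block and nonnegative integers `λ j h` realizing every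
`⌈δ q h / d q⌉` while respecting the bounds `b j`. -/
theorem block_decomposition
    (l k : ℕ) (hk : 0 < k) (d : ℕ → ℕ) (s b : Fin k → ℕ) (g : Fin k → ℕ)
    (hd1 : d 1 = 1)
    (hmono : ∀ q, 1 ≤ q → q < l → d q < d (q + 1))
    (hdvd : ∀ q, 1 ≤ q → q < l → d q ∣ d (q + 1))
    (hg : ∀ j : Fin k, g j ∈ Icc 1 l ∧ s j = d (g j))
    (hsorted : ∀ i j : Fin k, i ≤ j → s i ≤ s j)
    (hblock : ∀ j : Fin k, 0 < (j : ℕ) →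
      s j ≤ s ⟨0, hk⟩ + ∑ v ∈ univ.filter (fun v : Fin k => v < j), b v * s v)
    (δ : ℕ → ℕ → ℕ)
    (hδmul : ∀ q h, s ⟨0, hk⟩ ∣ δ q h)
    (hδle : ∀ q h, δ q h ≤ ∑ v : Fin k, b v * s v)
    (hcond : ∀ q ∈ Icc 1 l,
      ∑ h ∈ Icc q l, (δ q h + d q - 1) / d q
        ≤ ∑ w ∈ univ.filter (fun w : Fin k => s w = d q), b w) :
    ∃ (R : Finset (Fin k)) (lam : Fin k → ℕ → ℕ),
      (∀ j ∈ R, ∑ h ∈ Icc (g j) l, lam j h ≤ b j) ∧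
      (∀ q ∈ Icc 1 l, ∀ h ∈ Icc q l,
        ∑ j ∈ R.filter (fun j => g j = q), lam j h = (δ q h + d q - 1) / d q) :=
  block_decomposition_general l k d s b g hmono hg δ hcond
end

section
/- In the maximal block partition of the item set, the size of each block satisfies f_w > Σ_{u<w, p_u/f_u = p_w/f_w} f_u b̃_u, i.e., each block's item size strictly exceeds the total size of all earlier blocks having the same gain-per-unit ratio. -/
open Finset

/-- A list of (size, bound) pairs is a block: nonempty, sizes nondecreasing, and each
size is at most the first size plus the total size contributed by earlier items. -/
def IsBlockList (L : List (ℕ × ℕ)) : Prop :=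
  L ≠ [] ∧ L.Pairwise (fun a b => a.1 ≤ b.1) ∧
  ∀ j, 0 < j → j < L.length →
    (L.getD j (0, 0)).1 ≤ (L.getD 0 (0, 0)).1 +
      ∑ v ∈ range j, (L.getD v (0, 0)).2 * (L.getD v (0, 0)).1

/-!
If blocks `u < w` have the same gain per unit and `f w ≤ f u + Σ_u f b̃`, the sorted merge of
their items is again a block, contradicting maximality. For sorted lists the block condition
is equivalent to "every size is at most the head size plus the total size of the strictly
smaller items", which only depends on the multiset of items; this is what makes the merge a
block. Hence within one ratio class `f u + Σ_u f b̃ < f w` for consecutive blocks, and these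
inequalities telescope to the claim.
-/

def headSize (L : List (ℕ × ℕ)) : ℕ := (L.getD 0 (0, 0)).1

def totalSize (L : List (ℕ × ℕ)) : ℕ := (L.map fun x => x.2 * x.1).sum

def sizeBelow (L : List (ℕ × ℕ)) (T : ℕ) : ℕ := totalSize (L.filter fun x => x.1 < T)

section BlockList

variable {L A B : List (ℕ × ℕ)}

theorem headSize_eq_head (h : L ≠ []) : headSize L = (L.head h).1 := by
  cases L with
  | nil => exact absurd rfl h
  | cons x L => rfl

theorem totalSize_append : totalSize (A ++ B) = totalSize A + totalSize B := by
  simp [totalSize]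

theorem sum_range_eq_totalSize_take {j : ℕ} (hj : j ≤ L.length) :
    ∑ v ∈ range j, (L.getD v (0, 0)).2 * (L.getD v (0, 0)).1 = totalSize (L.take j) := by
  induction j with
  | zero => simp [totalSize]
  | succ j ih =>
    have hj' : j < L.length := by omega
    rw [sum_range_succ, ih hj'.le, List.take_add_one, List.getElem?_eq_getElem hj',
      List.getD_eq_getElem L _ hj', Option.toList_some, totalSize_append]
    simp [totalSize]

theorem totalSize_le_of_sublist (h : A.Sublist B) : totalSize A ≤ totalSize B :=
  (h.map _).sum_le_sum fun _ _ => Nat.zero_le _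

theorem sizeBelow_append (T : ℕ) : sizeBelow (A ++ B) T = sizeBelow A T + sizeBelow B T := by
  rw [sizeBelow, List.filter_append, totalSize_append]; rfl

theorem List.Perm.sizeBelow_eq (h : A.Perm B) (T : ℕ) : sizeBelow A T = sizeBelow B T :=
  ((h.filter _).map _).sum_eq

theorem sizeBelow_mono {T T' : ℕ} (h : T ≤ T') : sizeBelow L T ≤ sizeBelow L T' :=
  totalSize_le_of_sublist <| L.monotone_filter_right fun x hx => by
    simp only [decide_eq_true_eq] at hx ⊢; omega

theorem sizeBelow_eq_totalSize {T : ℕ} (h : ∀ x ∈ L, x.1 < T) :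
    sizeBelow L T = totalSize L := by
  rw [sizeBelow, List.filter_eq_self.2 fun x hx => by simpa using h x hx]

theorem totalSize_le_sizeBelow_of_sublist {T : ℕ} (hA : A.Sublist B) (h : ∀ x ∈ A, x.1 < T) :
    totalSize A ≤ sizeBelow B T :=
  sizeBelow_eq_totalSize h ▸ totalSize_le_of_sublist (hA.filter _)

theorem IsBlockList.headSize_le (hL : IsBlockList L) {x : ℕ × ℕ} (hx : x ∈ L) :
    headSize L ≤ x.1 := by
  obtain ⟨y, L, rfl⟩ := List.exists_cons_of_ne_nil hL.1
  rcases List.mem_cons.1 hx with rfl | hx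
  · exact le_rfl
  · exact List.rel_of_pairwise_cons hL.2.1 hx

-- Take the first item of size `≥ T`: every item before it is smaller than `T`.
theorem IsBlockList.le_headSize_add_sizeBelow (hL : IsBlockList L) {T : ℕ}
    (hT : ∃ a ∈ L, T ≤ a.1) : T ≤ headSize L + sizeBelow L T := by
  let P : ℕ × ℕ → Bool := fun y => T ≤ y.1
  have hi : L.findIdx P < L.length := List.findIdx_lt_length_of_exists (by simpa [P] using hT)
  have hTi : T ≤ L[L.findIdx P].1 := by simpa [P] using List.findIdx_getElem (w := hi)
  have hprefix : totalSize (L.take (L.findIdx P)) ≤ sizeBelow L T := by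
    refine totalSize_le_sizeBelow_of_sublist (L.take_sublist _) fun y hy => ?_
    obtain ⟨v, hv, rfl⟩ := List.mem_iff_getElem.1 hy
    rw [List.length_take] at hv
    simpa [P] using List.not_of_lt_findIdx (p := P) (lt_min_iff.1 hv).1
  rcases Nat.eq_zero_or_pos (L.findIdx P) with h0 | h0
  · rw [headSize, List.getD_eq_getElem L _ (h0 ▸ hi)]
    simp only [h0] at hTi
    omega
  · have hblock := hL.2.2 _ h0 hi
    rw [List.getD_eq_getElem L _ hi, sum_range_eq_totalSize_take hi.le] at hblock
    exact hTi.trans (hblock.trans (Nat.add_le_add_left hprefix _))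

theorem IsBlockList.le_headSize_add_sizeBelow_of_le (hL : IsBlockList L) {T : ℕ}
    (hT : T ≤ headSize L + totalSize L) : T ≤ headSize L + sizeBelow L T := by
  by_cases h : ∃ a ∈ L, T ≤ a.1
  · exact hL.le_headSize_add_sizeBelow h
  · push Not at h
    rwa [sizeBelow_eq_totalSize h]

theorem isBlockList_of_le_headSize_add_sizeBelow (hne : L ≠ [])
    (hsorted : L.Pairwise fun a b => a.1 ≤ b.1)
    (h : ∀ x ∈ L, x.1 ≤ headSize L + sizeBelow L x.1) : IsBlockList L := by
  refine ⟨hne, hsorted, fun j _ hj => ?_⟩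
  rw [List.getD_eq_getElem L _ hj, sum_range_eq_totalSize_take hj.le]
  have hx := L.getElem_mem hj
  have hdrop_sorted := List.drop_eq_getElem_cons hj
  generalize L[j] = x at hx hdrop_sorted ⊢
  have hdrop : sizeBelow (L.drop j) x.1 = 0 := by
    rw [sizeBelow, List.filter_eq_nil_iff.2, totalSize, List.map_nil, List.sum_nil]
    intro a ha
    have hsd := hsorted.drop (i := j)
    rw [hdrop_sorted] at hsd ha
    rcases List.mem_cons.1 ha with rfl | ha
    · simp
    · simpa using List.rel_of_pairwise_cons hsd ha
  have hbelow : sizeBelow L x.1 ≤ totalSize (L.take j) := by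
    conv_lhs => rw [← L.take_append_drop j]
    rw [sizeBelow_append, hdrop, add_zero]
    exact totalSize_le_of_sublist List.filter_sublist
  exact (h x hx).trans (by unfold headSize at *; omega)

theorem IsBlockList.mergeSort_append (hA : IsBlockList A) (hB : IsBlockList B)
    (hAB : headSize A ≤ headSize B) (hsize : headSize B ≤ headSize A + totalSize A) :
    IsBlockList ((A ++ B).mergeSort fun a b => a.1 ≤ b.1) := by
  set L := (A ++ B).mergeSort fun a b => a.1 ≤ b.1
  have hperm : L.Perm (A ++ B) := List.mergeSort_perm _ _
  have hne : L ≠ [] := fun h => hA.1 (by simpa [h] using hperm.symm : A = [] ∧ B = []).1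
  have hsorted : L.Pairwise fun a b => a.1 ≤ b.1 := by
    simpa using List.pairwise_mergeSort (le := fun a b : ℕ × ℕ => decide (a.1 ≤ b.1))
      (fun a b c hab hbc => by simp only [decide_eq_true_eq] at *; omega)
      (fun a b => by simp only [Bool.or_eq_true, decide_eq_true_eq]; omega) (A ++ B)
  have hhead_le : ∀ x ∈ A ++ B, headSize A ≤ x.1 := by
    rintro x hx
    rcases List.mem_append.1 hx with hx | hx
    · exact hA.headSize_le hx
    · exact hAB.trans (hB.headSize_le hx)
  have hheadL : headSize A ≤ headSize L := by
    rw [headSize_eq_head hne]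
    exact hhead_le _ (hperm.mem_iff.1 (L.head_mem hne))
  refine isBlockList_of_le_headSize_add_sizeBelow hne hsorted fun x hx => ?_
  rw [hperm.sizeBelow_eq, sizeBelow_append]
  rcases List.mem_append.1 (hperm.mem_iff.1 hx) with hxA | hxB
  · have := hA.le_headSize_add_sizeBelow ⟨x, hxA, le_rfl⟩
    omega
  · have hx := hB.le_headSize_add_sizeBelow ⟨x, hxB, le_rfl⟩
    have hheadB := hA.le_headSize_add_sizeBelow_of_le hsize
    have hmono := sizeBelow_mono (L := A) (hB.headSize_le hxB)
    omega

theorem IsBlockList.headSize_add_totalSize_lt (hA : IsBlockList A) (hB : IsBlockList B)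
    (hAB : headSize A ≤ headSize B) (hmax : ∀ L, L.Perm (A ++ B) → ¬ IsBlockList L) :
    headSize A + totalSize A < headSize B :=
  lt_of_not_ge fun hsize =>
    hmax _ (List.mergeSort_perm _ _) (hA.mergeSort_append hB hAB hsize)

end BlockList

theorem Finset.sum_filter_lt_lt_of_add_lt {S : Finset ℕ} {c f : ℕ → ℕ}
    (hpos : ∀ w ∈ S, 0 < f w) (hgap : ∀ u ∈ S, ∀ w ∈ S, u < w → f u + c u < f w) :
    ∀ w ∈ S, ∑ u ∈ S.filter (· < w), c u < f w := by
  intro w hw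
  induction w using Nat.strong_induction_on with
  | _ w ih =>
  rcases (S.filter (· < w)).eq_empty_or_nonempty with hempty | hne
  · simpa [hempty] using hpos w hw
  · set u := (S.filter (· < w)).max' hne
    obtain ⟨huS, huw⟩ := mem_filter.1 ((S.filter (· < w)).max'_mem hne)
    have hsplit : S.filter (· < w) = insert u (S.filter (· < u)) := by
      ext v
      simp only [mem_filter, mem_insert]
      constructor
      · rintro ⟨hvS, hvw⟩
        have hvS' : v ∈ S.filter (· < w) := mem_filter.2 ⟨hvS, hvw⟩
        rcases (le_max' _ v hvS').lt_or_eq with hvu | hvu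
        · exact Or.inr ⟨hvS, hvu⟩
        · exact Or.inl hvu
      · rintro (rfl | ⟨hvS, hvu⟩)
        · exact ⟨huS, huw⟩
        · exact ⟨hvS, hvu.trans huw⟩
    rw [hsplit, sum_insert (by simp)]
    have := ih u huw huS
    have := hgap u huS w hw huw
    omega

theorem Finset.filter_Icc_sub_one_eq {t w : ℕ} (hw : w ∈ Icc 1 t) (P : ℕ → Prop)
    [DecidablePred P] : (Icc 1 (w - 1)).filter P = ((Icc 1 t).filter P).filter (· < w) := by
  ext u
  rw [mem_Icc] at hw
  simp only [mem_filter, mem_Icc]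
  constructor
  · rintro ⟨⟨h1, h2⟩, hP⟩
    exact ⟨⟨⟨h1, by omega⟩, hP⟩, by omega⟩
  · rintro ⟨⟨⟨h1, -⟩, hP⟩, h2⟩
    exact ⟨⟨h1, by omega⟩, hP⟩

theorem maximal_block_size_property_general
    (t : ℕ) (items : ℕ → List (ℕ × ℕ)) (f : ℕ → ℕ) (p : ℕ → ℚ)
    (hblk : ∀ w ∈ Icc 1 t, IsBlockList (items w))
    (hchainpos : ∀ w ∈ Icc 1 t, ∀ x ∈ items w, 0 < x.1 ∧ 0 < x.2)
    (hf : ∀ w ∈ Icc 1 t, f w = ((items w).getD 0 (0, 0)).1)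
    (hfmono : ∀ u w, 1 ≤ u → u ≤ w → w ≤ t → f u ≤ f w)
    (hmax : ∀ u w, 1 ≤ u → u < w → w ≤ t →
      p u * (f w : ℚ) = p w * (f u : ℚ) →
      ∀ L : List (ℕ × ℕ), L.Perm (items u ++ items w) → ¬ IsBlockList L) :
    ∀ w ∈ Icc 1 t,
      (∑ u ∈ (Icc 1 (w - 1)).filter (fun u => p u * (f w : ℚ) = p w * (f u : ℚ)),
        ((items u).map (fun x => x.2 * x.1)).sum) < f w := by
  have hfpos : ∀ w ∈ Icc 1 t, 0 < f w := fun w hw => by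
    rw [hf w hw, ← headSize, headSize_eq_head (hblk w hw).1]
    exact (hchainpos w hw _ (List.head_mem _)).1
  have hratio : ∀ u ∈ Icc 1 t, ∀ w ∈ Icc 1 t,
      p u / f u = p w / f w ↔ p u * (f w : ℚ) = p w * (f u : ℚ) := fun u hu w hw =>
    div_eq_div_iff (by exact_mod_cast (hfpos u hu).ne') (by exact_mod_cast (hfpos w hw).ne')
  have hgap : ∀ u ∈ Icc 1 t, ∀ v ∈ Icc 1 t, u < v → p u / f u = p v / f v →
      f u + totalSize (items u) < f v := fun u hu v hv huv huv_ratio => by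
    have hfuv := hfmono u v (mem_Icc.1 hu).1 huv.le (mem_Icc.1 hv).2
    rw [hf u hu, hf v hv] at hfuv ⊢
    exact (hblk u hu).headSize_add_totalSize_lt (hblk v hv) hfuv <|
      hmax u v (mem_Icc.1 hu).1 huv (mem_Icc.1 hv).2 ((hratio u hu v hv).1 huv_ratio)
  intro w hw
  rw [filter_Icc_sub_one_eq hw, filter_congr fun u hu => (hratio u hu w hw).symm]
  refine sum_filter_lt_lt_of_add_lt (fun v hv => hfpos v (mem_filter.1 hv).1)
    (fun u hu v hv huv => ?_) w (mem_filter.2 ⟨hw, rfl⟩)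
  exact hgap u (mem_filter.1 hu).1 v (mem_filter.1 hv).1 huv
    ((mem_filter.1 hu).2.trans (mem_filter.1 hv).2.symm)

/-- Property of the maximal block partition: the size `f w` of each block strictly
exceeds the total size `Σ f u * b̃ u` of all earlier blocks with the same gain per
unit `p/f`. -/
theorem maximal_block_size_property
    (t : ℕ) (items : ℕ → List (ℕ × ℕ)) (f : ℕ → ℕ) (p : ℕ → ℚ)
    (hblk : ∀ w ∈ Icc 1 t, IsBlockList (items w))
    (hchainpos : ∀ w ∈ Icc 1 t, ∀ x ∈ items w, 0 < x.1 ∧ 0 < x.2)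
    (hchain : ∀ w ∈ Icc 1 t, ∀ x ∈ items w, ∀ w' ∈ Icc 1 t, ∀ x' ∈ items w',
      x.1 ∣ x'.1 ∨ x'.1 ∣ x.1)
    (hf : ∀ w ∈ Icc 1 t, f w = ((items w).getD 0 (0, 0)).1)
    (hfmono : ∀ u w, 1 ≤ u → u ≤ w → w ≤ t → f u ≤ f w)
    (hmax : ∀ u w, 1 ≤ u → u < w → w ≤ t →
      p u * (f w : ℚ) = p w * (f u : ℚ) →
      ∀ L : List (ℕ × ℕ), L.Perm (items u ++ items w) → ¬ IsBlockList L) :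
    ∀ w ∈ Icc 1 t,
      (∑ u ∈ (Icc 1 (w - 1)).filter (fun u => p u * (f w : ℚ) = p w * (f u : ℚ)),
        ((items u).map (fun x => x.2 * x.1)).sum) < f w :=
  maximal_block_size_property_general t items f p hblk hchainpos hf hfmono hmax
end

section
/- If x is a feasible solution of SMKP and y is the corresponding solution of M-SP defined by y^h_{w,q} = Σ_{j∈B_w: g(j)=q} (d_q/f_w) Σ_{i=1}^{m} x^h_{i,j}, then y is feasible for M-SP and the total profit satisfies p(y) = v(x), where v_j = p_w d_{g(j)}/f_w for j ∈ B_w (from the maximal block partition). -/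
/-!
Inside a block `(w, q)` every item has size `d q` and `f w ∣ d q`, so `f w * y w q h` is an exact
multiple of `d q`: all the ceilings in the M-SP constraints are exact, and `⌈f w * y w q h / d q⌉`
is just the number of copies of items of that block packed in part `h`, summed over the knapsacks.
Summing these counts over blocks regroups the SMKP constraints item by item, and summing the
part capacities over the knapsacks turns the `m` capacity constraints into the single one of M-SP.
-/

open Finset

def smkFeasible (n m l : ℕ) (s bnd : ℕ → ℕ) (g : ℕ → ℕ) (r : ℕ → ℕ → ℕ)
    (x : ℕ → ℕ → ℕ → ℕ) : Prop :=
  (∀ i ∈ Icc 1 m, ∀ h ∈ Icc 1 l,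
    ∑ j ∈ (Icc 1 n).filter (fun j => g j ≤ h), s j * x i j h ≤ r i h) ∧
  (∀ j ∈ Icc 1 n, ∑ i ∈ Icc 1 m, ∑ h ∈ Icc (g j) l, x i j h ≤ bnd j)

def mspFeasible (t l : ℕ) (f d cbar : ℕ → ℕ) (bt : ℕ → ℕ → ℕ)
    (y : ℕ → ℕ → ℕ → ℕ) : Prop :=
  (∀ h ∈ Icc 1 l,
    ∑ w ∈ Icc 1 t, ∑ q ∈ Icc 1 h, ((f w * y w q h + d q - 1) / d q) * d q ≤ cbar h) ∧
  (∀ w ∈ Icc 1 t, ∀ q ∈ Icc 1 l,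
    ∑ h ∈ Icc q l, (f w * y w q h + d q - 1) / d q ≤ f w * bt w q / d q)

def ymap (n m : ℕ) (d f : ℕ → ℕ) (g blk : ℕ → ℕ) (x : ℕ → ℕ → ℕ → ℕ)
    (w q h : ℕ) : ℕ :=
  ∑ j ∈ (Icc 1 n).filter (fun j => blk j = w ∧ g j = q),
    (d q / f w) * ∑ i ∈ Icc 1 m, x i j h

def blockLoad (n m : ℕ) (g blk : ℕ → ℕ) (x : ℕ → ℕ → ℕ → ℕ) (w q h : ℕ) : ℕ :=
  ∑ j ∈ (Icc 1 n).filter (fun j => blk j = w ∧ g j = q), ∑ i ∈ Icc 1 m, x i j h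

lemma Nat.mul_add_sub_one_div_self {d : ℕ} (hd : 0 < d) (a : ℕ) : (d * a + d - 1) / d = a := by
  simpa [Nat.ceilDiv_eq_add_pred_div] using smul_ceilDiv hd a

lemma sum_sum_sum_filter_block_eq_sum_filter_le {M : Type*} [AddCommMonoid M] {n t h : ℕ}
    {g blk : ℕ → ℕ} (hb : ∀ j ∈ Icc 1 n, blk j ∈ Icc 1 t ∧ 1 ≤ g j) (F : ℕ → M) :
    ∑ w ∈ Icc 1 t, ∑ q ∈ Icc 1 h, ∑ j ∈ (Icc 1 n).filter (fun j => blk j = w ∧ g j = q), F j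
      = ∑ j ∈ (Icc 1 n).filter (fun j => g j ≤ h), F j := by
  simp_rw [← Prod.mk.injEq]
  rw [← sum_product' (f := fun w q =>
      ∑ j ∈ (Icc 1 n).filter (fun j => (blk j, g j) = (w, q)), F j),
    sum_fiberwise_eq_sum_filter]
  refine sum_congr (filter_congr fun j hj => ?_) fun _ _ => rfl
  have := hb j hj
  simp only [mem_product, mem_Icc] at this ⊢
  omega

lemma sum_sum_filter_le_eq_sum_sum_Icc {M : Type*} [AddCommMonoid M] {n l : ℕ} {g : ℕ → ℕ}
    (hg : ∀ j ∈ Icc 1 n, 1 ≤ g j) (F : ℕ → ℕ → M) :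
    ∑ h ∈ Icc 1 l, ∑ j ∈ (Icc 1 n).filter (fun j => g j ≤ h), F j h
      = ∑ j ∈ Icc 1 n, ∑ h ∈ Icc (g j) l, F j h :=
  sum_comm' fun h j => by
    have := hg j
    simp only [mem_filter, mem_Icc] at this ⊢
    constructor <;> intro <;> omega

section Correspondence

variable {n m l t : ℕ} {s bnd g blk : ℕ → ℕ} {r : ℕ → ℕ → ℕ} {f d : ℕ → ℕ}
  {x : ℕ → ℕ → ℕ → ℕ}

lemma mul_ymap_eq_mul_blockLoad (hfdvd : ∀ j ∈ Icc 1 n, f (blk j) ∣ d (g j)) (w q h : ℕ) :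
    f w * ymap n m d f g blk x w q h = d q * blockLoad n m g blk x w q h := by
  rw [ymap, blockLoad, mul_sum, mul_sum]
  refine sum_congr rfl fun j hj => ?_
  obtain ⟨hjn, rfl, rfl⟩ := mem_filter.mp hj
  rw [← mul_assoc, Nat.mul_div_cancel' (hfdvd j hjn)]

lemma ymap_ceilDiv_eq_blockLoad (hfdvd : ∀ j ∈ Icc 1 n, f (blk j) ∣ d (g j)) {q : ℕ}
    (hq : 0 < d q) (w h : ℕ) :
    (f w * ymap n m d f g blk x w q h + d q - 1) / d q = blockLoad n m g blk x w q h := by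
  rw [mul_ymap_eq_mul_blockLoad hfdvd, Nat.mul_add_sub_one_div_self hq]

lemma mul_cast_ymap (hfdvd : ∀ j ∈ Icc 1 n, f (blk j) ∣ d (g j)) (p : ℕ → ℚ) (w q h : ℕ) :
    p w * (ymap n m d f g blk x w q h : ℚ)
      = ∑ j ∈ (Icc 1 n).filter (fun j => blk j = w ∧ g j = q),
          p (blk j) * d (g j) / f (blk j) * ∑ i ∈ Icc 1 m, (x i j h : ℚ) := by
  rw [ymap, Nat.cast_sum, mul_sum]
  refine sum_congr rfl fun j hj => ?_
  obtain ⟨hjn, rfl, rfl⟩ := mem_filter.mp hj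
  push_cast [Nat.cast_div_charZero (hfdvd j hjn)]
  ring

lemma msp_capacity_of_smkFeasible
    (hdpos : ∀ q ∈ Icc 1 l, 0 < d q) (hb : ∀ j ∈ Icc 1 n, blk j ∈ Icc 1 t ∧ 1 ≤ g j)
    (hs : ∀ j ∈ Icc 1 n, s j = d (g j)) (hfdvd : ∀ j ∈ Icc 1 n, f (blk j) ∣ d (g j))
    (hx : smkFeasible n m l s bnd g r x) {h : ℕ} (hh : h ∈ Icc 1 l) :
    ∑ w ∈ Icc 1 t, ∑ q ∈ Icc 1 h,
        (f w * ymap n m d f g blk x w q h + d q - 1) / d q * d q ≤ ∑ i ∈ Icc 1 m, r i h := by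
  calc ∑ w ∈ Icc 1 t, ∑ q ∈ Icc 1 h,
        (f w * ymap n m d f g blk x w q h + d q - 1) / d q * d q
      = ∑ w ∈ Icc 1 t, ∑ q ∈ Icc 1 h,
          ∑ j ∈ (Icc 1 n).filter (fun j => blk j = w ∧ g j = q),
            s j * ∑ i ∈ Icc 1 m, x i j h := by
        refine sum_congr rfl fun w _ => sum_congr rfl fun q hq => ?_
        have hq : q ∈ Icc 1 l := by
          simp only [mem_Icc] at hq hh ⊢
          omega
        rw [ymap_ceilDiv_eq_blockLoad hfdvd (hdpos q hq), blockLoad, sum_mul]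
        refine sum_congr rfl fun j hj => ?_
        obtain ⟨hjn, -, rfl⟩ := mem_filter.mp hj
        rw [hs j hjn, mul_comm]
    _ = ∑ i ∈ Icc 1 m, ∑ j ∈ (Icc 1 n).filter (fun j => g j ≤ h), s j * x i j h := by
        simp_rw [sum_sum_sum_filter_block_eq_sum_filter_le hb, mul_sum]
        exact sum_comm
    _ ≤ ∑ i ∈ Icc 1 m, r i h := sum_le_sum fun i hi => hx.1 i hi h hh

lemma msp_multiplicity_of_smkFeasible
    (hdpos : ∀ q ∈ Icc 1 l, 0 < d q)
    (hfdvd : ∀ j ∈ Icc 1 n, f (blk j) ∣ d (g j))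
    (hx : smkFeasible n m l s bnd g r x) {bt : ℕ → ℕ → ℕ} {w q : ℕ} (hq : q ∈ Icc 1 l)
    (hbt : f w * bt w q =
      d q * ∑ j ∈ (Icc 1 n).filter (fun j => blk j = w ∧ g j = q), bnd j) :
    ∑ h ∈ Icc q l, (f w * ymap n m d f g blk x w q h + d q - 1) / d q ≤ f w * bt w q / d q := by
  rw [hbt, Nat.mul_div_cancel_left _ (hdpos q hq)]
  simp_rw [ymap_ceilDiv_eq_blockLoad hfdvd (hdpos q hq), blockLoad]
  rw [sum_comm]
  refine sum_le_sum fun j hj => ?_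
  obtain ⟨hjn, -, rfl⟩ := mem_filter.mp hj
  rw [sum_comm]
  exact hx.2 j hjn

lemma msp_value_eq_smkp_value (hb : ∀ j ∈ Icc 1 n, blk j ∈ Icc 1 t ∧ 1 ≤ g j)
    (hfdvd : ∀ j ∈ Icc 1 n, f (blk j) ∣ d (g j)) (p : ℕ → ℚ) :
    ∑ h ∈ Icc 1 l, ∑ w ∈ Icc 1 t, ∑ q ∈ Icc 1 h, p w * (ymap n m d f g blk x w q h : ℚ)
      = ∑ i ∈ Icc 1 m, ∑ j ∈ Icc 1 n, ∑ h ∈ Icc (g j) l,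
          p (blk j) * d (g j) / f (blk j) * (x i j h : ℚ) := by
  simp_rw [mul_cast_ymap hfdvd, sum_sum_sum_filter_block_eq_sum_filter_le hb,
    sum_sum_filter_le_eq_sum_sum_Icc (fun j hj => (hb j hj).2), mul_sum]
  rw [sum_comm]
  exact sum_congr rfl fun j _ => sum_comm

end Correspondence

theorem smkp_to_msp_feasible_and_value_general
    (n m l t : ℕ) (s bnd : ℕ → ℕ) (g blk : ℕ → ℕ) (r : ℕ → ℕ → ℕ)
    (f d : ℕ → ℕ) (bt : ℕ → ℕ → ℕ) (p : ℕ → ℚ) (x : ℕ → ℕ → ℕ → ℕ)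
    (hdpos : ∀ q ∈ Icc 1 l, 0 < d q)
    (hblk : ∀ j ∈ Icc 1 n, blk j ∈ Icc 1 t ∧ g j ∈ Icc 1 l ∧ s j = d (g j))
    (hfdvd : ∀ j ∈ Icc 1 n, f (blk j) ∣ d (g j))
    (hbt : ∀ w ∈ Icc 1 t, ∀ q ∈ Icc 1 l,
      f w * bt w q = d q * ∑ j ∈ (Icc 1 n).filter (fun j => blk j = w ∧ g j = q), bnd j)
    (hx : smkFeasible n m l s bnd g r x) :
    mspFeasible t l f d (fun h => ∑ i ∈ Icc 1 m, r i h) bt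
      (ymap n m d f g blk x) ∧
    (∑ h ∈ Icc 1 l, ∑ w ∈ Icc 1 t, ∑ q ∈ Icc 1 h,
        p w * ((ymap n m d f g blk x) w q h : ℚ)) =
      ∑ i ∈ Icc 1 m, ∑ j ∈ Icc 1 n, ∑ h ∈ Icc (g j) l,
        (p (blk j) * (d (g j) : ℚ) / (f (blk j) : ℚ)) * (x i j h : ℚ) := by
  have hb j (hj : j ∈ Icc 1 n) : blk j ∈ Icc 1 t ∧ 1 ≤ g j :=
    ⟨(hblk j hj).1, (mem_Icc.mp (hblk j hj).2.1).1⟩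
  exact ⟨⟨fun _ hh =>
      msp_capacity_of_smkFeasible hdpos hb (fun j hj => (hblk j hj).2.2) hfdvd hx hh,
    fun w hw q hq => msp_multiplicity_of_smkFeasible hdpos hfdvd hx hq (hbt w hw q hq)⟩,
    msp_value_eq_smkp_value hb hfdvd p⟩

/-- Correspondence: the image of a feasible SMKP solution `x` is feasible for M-SP
(with a single knapsack of part-capacities `c̄ h = Σ_i r i h`) and preserves the value,
where `v j = p (blk j) * d (g j) / f (blk j)`. -/
theorem smkp_to_msp_feasible_and_value
    (n m l t : ℕ) (s bnd : ℕ → ℕ) (g blk : ℕ → ℕ) (r : ℕ → ℕ → ℕ)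
    (f d : ℕ → ℕ) (bt : ℕ → ℕ → ℕ) (p : ℕ → ℚ) (x : ℕ → ℕ → ℕ → ℕ)
    (hd1 : d 1 = 1)
    (hchain : ∀ q, 1 ≤ q → q < l → d q ∣ d (q + 1) ∧ d q < d (q + 1))
    (hdpos : ∀ q ∈ Icc 1 l, 0 < d q)
    (hfpos : ∀ w ∈ Icc 1 t, 0 < f w)
    (hblk : ∀ j ∈ Icc 1 n, blk j ∈ Icc 1 t ∧ g j ∈ Icc 1 l ∧ s j = d (g j))
    (hfdvd : ∀ j ∈ Icc 1 n, f (blk j) ∣ d (g j))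
    (hr : ∀ i ∈ Icc 1 m, ∀ h ∈ Icc 1 l, d h ∣ r i h)
    (hbt : ∀ w ∈ Icc 1 t, ∀ q ∈ Icc 1 l,
      f w * bt w q = d q * ∑ j ∈ (Icc 1 n).filter (fun j => blk j = w ∧ g j = q), bnd j)
    (hx : smkFeasible n m l s bnd g r x) :
    mspFeasible t l f d (fun h => ∑ i ∈ Icc 1 m, r i h) bt
      (ymap n m d f g blk x) ∧
    (∑ h ∈ Icc 1 l, ∑ w ∈ Icc 1 t, ∑ q ∈ Icc 1 h,
        p w * ((ymap n m d f g blk x) w q h : ℚ)) =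
      ∑ i ∈ Icc 1 m, ∑ j ∈ Icc 1 n, ∑ h ∈ Icc (g j) l,
        (p (blk j) * (d (g j) : ℚ) / (f (blk j) : ℚ)) * (x i j h : ℚ) :=
  smkp_to_msp_feasible_and_value_general n m l t s bnd g blk r f d bt p x hdpos hblk hfdvd hbt hx
end

section
/- Let d_1 | d_2 | ... | d_l be a divisible chain with d_1 = 1 and d_{h+1} ≥ 2 d_h for each h. Given nonnegative integers F_1,...,F_l with d_h | F_h, and a nonincreasing construction of sets via sizes: define v^h recursively by v^h = min{ ⌊ S_h / d_h ⌋ d_h, F_h } where S_1 is a given total size and S_{h+1} = S_h − v^h + A_{h+1} for given nonnegative A_{h+1} divisible by d_{h+1}. Then for every h, any quantity A satisfying the 'maximum-greedy' recursion A'_1 = S_1, A'_{h+1} = A'_h − min{F_h, A'_h} + A_{h+1} satisfies ⌊A'_h / d_h⌋ d_h = ⌊S_h / d_h⌋ d_h for all h (the floors to the nearest multiple of d_h of the min-assignment and max-assignment residuals coincide). -/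
open Finset

/-! By induction, write `S h = q * d h + r` and `A' h = q * d h + r'` with `r, r' < d h`. If `F h ≤ q * d h`,
both recursions remove `F h`; otherwise `F h ≥ (q + 1) * d h > A' h`, so the min-assignment
keeps only `r` and the max-assignment keeps nothing. Either way both new residuals are a common
multiple `B` of `d h` plus something below `d h`, and such a remainder does not change the floor
at any multiple `d (h + 1)` of `d h`. -/

lemma Nat.add_div_eq_div_of_dvd_of_lt {e D B r : ℕ} (heD : e ∣ D) (heB : e ∣ B) (hr : r < e) :
    (B + r) / D = B / D := by
  obtain ⟨k, rfl⟩ := heD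
  rw [← Nat.div_div_eq_div_mul, ← Nat.div_div_eq_div_mul, Nat.add_div_of_dvd_right heB,
    Nat.div_eq_of_lt hr, Nat.add_zero]

lemma residual_step_div_eq {d D F a s s' : ℕ} (hdD : d ∣ D) (hdF : d ∣ F) (hda : d ∣ a)
    (hss' : s' / d = s / d) :
    (s' - min F s' + a) / D = (s - min (s / d * d) F + a) / D := by
  rcases Nat.eq_zero_or_pos d with rfl | hd
  · simp [Nat.eq_zero_of_zero_dvd hdD]
  set q := s / d
  have hs : q * d + s % d = s := Nat.div_add_mod' s d
  have hs' : q * d + s' % d = s' := hss' ▸ Nat.div_add_mod' s' d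
  have hr : s % d < d := Nat.mod_lt s hd
  have hr' : s' % d < d := Nat.mod_lt s' hd
  rcases le_or_gt F (q * d) with hFq | hqF
  · have hB : d ∣ q * d - F + a := Nat.dvd_add (Nat.dvd_sub (dvd_mul_left d q) hdF) hda
    rw [min_eq_left (by omega : F ≤ s'), min_eq_right hFq,
      show s' - F + a = q * d - F + a + s' % d by omega,
      show s - F + a = q * d - F + a + s % d by omega,
      Nat.add_div_eq_div_of_dvd_of_lt hdD hB hr', Nat.add_div_eq_div_of_dvd_of_lt hdD hB hr]
  · have hgap : d ≤ F - q * d := Nat.le_of_dvd (by omega) (Nat.dvd_sub hdF (dvd_mul_left d q))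
    rw [min_eq_right (by omega : s' ≤ F), min_eq_left hqF.le,
      show s - q * d + a = a + s % d by omega, Nat.add_div_eq_div_of_dvd_of_lt hdD hda hr,
      Nat.sub_self, Nat.zero_add]

theorem min_max_residual_floors_coincide_general
    (l : ℕ) (d F A S A' : ℕ → ℕ)
    (hchain : ∀ h, 1 ≤ h → h < l → d h ∣ d (h + 1) ∧ 2 * d h ≤ d (h + 1))
    (hF : ∀ h ∈ Icc 1 l, d h ∣ F h)
    (hA : ∀ h, 1 < h → h ≤ l → d h ∣ A h)
    (hS : ∀ h, 1 ≤ h → h < l →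
      S (h + 1) = S h - min (S h / d h * d h) (F h) + A (h + 1))
    (hA'1 : A' 1 = S 1)
    (hA' : ∀ h, 1 ≤ h → h < l →
      A' (h + 1) = A' h - min (F h) (A' h) + A (h + 1)) :
    ∀ h ∈ Icc 1 l, A' h / d h * d h = S h / d h * d h := by
  intro h hh
  obtain ⟨h1, hle⟩ := mem_Icc.mp hh
  suffices A' h / d h = S h / d h by rw [this]
  clear hh
  induction h, h1 using Nat.le_induction with
  | base => rw [hA'1]
  | succ h h1 ih =>
    have hl : h < l := hle
    have hdvd : d h ∣ d (h + 1) := (hchain h h1 hl).1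
    rw [hS h h1 hl, hA' h h1 hl]
    exact residual_step_div_eq hdvd (hF h (mem_Icc.mpr ⟨h1, hl.le⟩))
      (hdvd.trans (hA (h + 1) (by omega) hle)) (ih hl.le)

/-- Floors of the min-assignment residual `S` and of the max-assignment residual `A'`
coincide: with a divisible chain `d` (`d 1 = 1`, `2 * d h ≤ d (h+1)`), capacities
`F h` multiples of `d h`, arrivals `A (h+1)` multiples of `d (h+1)`, the recursions
`S (h+1) = S h - min (⌊S h / d h⌋ d h) (F h) + A (h+1)` and
`A' (h+1) = A' h - min (F h) (A' h) + A (h+1)` with `A' 1 = S 1` satisfy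
`⌊A' h / d h⌋ d h = ⌊S h / d h⌋ d h` for all `h`. -/
theorem min_max_residual_floors_coincide
    (l : ℕ) (d F A S A' : ℕ → ℕ)
    (hd1 : d 1 = 1)
    (hdpos : ∀ h ∈ Icc 1 l, 0 < d h)
    (hchain : ∀ h, 1 ≤ h → h < l → d h ∣ d (h + 1) ∧ 2 * d h ≤ d (h + 1))
    (hF : ∀ h ∈ Icc 1 l, d h ∣ F h)
    (hA : ∀ h, 1 < h → h ≤ l → d h ∣ A h)
    (hS : ∀ h, 1 ≤ h → h < l →
      S (h + 1) = S h - min (S h / d h * d h) (F h) + A (h + 1))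
    (hA'1 : A' 1 = S 1)
    (hA' : ∀ h, 1 ≤ h → h < l →
      A' (h + 1) = A' h - min (F h) (A' h) + A (h + 1)) :
    ∀ h ∈ Icc 1 l, A' h / d h * d h = S h / d h * d h :=
  min_max_residual_floors_coincide_general l d F A S A' hchain hF hA hS hA'1 hA'
end
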